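/- arXiv:1902.04640 — 7 statements merged into one kernel-verified Lean document; each statement's English description precedes it below -/
import Mathlib

section
/- For all real numbers a, b, c, d with a*b < 0, one has (a+b)*(c^2/a + d^2/b) ≤ (c-d)^2. -/
theorem stmt_0 (a b c d : ℝ) (hab : a * b < 0) :
    (a + b) * (c ^ 2 / a + d ^ 2 / b) ≤ (c - d) ^ 2 := by
  have ha : a ≠ 0 := fun h => by simp [h] at hab
  have hb : b ≠ 0 := fun h => by simp [h] at hab
  rw [div_add_div _ _ ha hb, ← mul_div_assoc, div_le_iff_of_neg hab]
  nlinarith [sq_nonneg (b * c + a * d)]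
end

section
/- For all real numbers α and β, (e^{β/2} - e^{α/2})^2 ≤ (1/4)*(e^β - e^α)*(β - α). -/
lemma aux_mono_stmt1 : Monotone (fun t : ℝ => t * (Real.exp t + 1) - 2 * (Real.exp t - 1)) := by
  have hd : ∀ t : ℝ, HasDerivAt (fun t : ℝ => t * (Real.exp t + 1) - 2 * (Real.exp t - 1))
      (1 - (1 - t) * Real.exp t) t := by
    intro t
    have h1 : HasDerivAt (fun t : ℝ => t * (Real.exp t + 1))
        (1 * (Real.exp t + 1) + t * Real.exp t) t :=
      (hasDerivAt_id t).mul ((Real.hasDerivAt_exp t).add_const 1)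
    have h2 : HasDerivAt (fun t : ℝ => 2 * (Real.exp t - 1)) (2 * Real.exp t) t :=
      ((Real.hasDerivAt_exp t).sub_const 1).const_mul 2
    rw [show (1 - (1 - t) * Real.exp t) = 1 * (Real.exp t + 1) + t * Real.exp t - 2 * Real.exp t by ring]
    exact h1.sub h2
  apply monotone_of_deriv_nonneg (fun t => (hd t).differentiableAt)
  intro t
  rw [(hd t).deriv]
  have hmul : Real.exp (-t) * Real.exp t = 1 := by
    rw [← Real.exp_add]; simp
  nlinarith [Real.add_one_le_exp (-t), Real.exp_pos t]

lemma aux_key_stmt1 (t : ℝ) :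
    0 ≤ (Real.exp t - 1) * (t * (Real.exp t + 1) - 2 * (Real.exp t - 1)) := by
  rcases le_total t 0 with ht | ht
  · have h1 : t * (Real.exp t + 1) - 2 * (Real.exp t - 1) ≤ 0 := by
      have := aux_mono_stmt1 ht
      simpa using this
    have h2 : Real.exp t - 1 ≤ 0 := by
      have := Real.exp_le_one_iff.mpr ht
      linarith
    exact mul_nonneg_of_nonpos_of_nonpos h2 h1
  · have h1 : 0 ≤ t * (Real.exp t + 1) - 2 * (Real.exp t - 1) := by
      have := aux_mono_stmt1 ht
      simpa using this
    have h2 : 0 ≤ Real.exp t - 1 := by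
      have := Real.one_le_exp ht
      linarith
    exact mul_nonneg h2 h1

theorem stmt_1 (α β : ℝ) :
    (Real.exp (β / 2) - Real.exp (α / 2)) ^ 2
      ≤ (1 / 4) * (Real.exp β - Real.exp α) * (β - α) := by
  set t : ℝ := (β - α) / 2 with ht
  set A : ℝ := Real.exp (α / 2) with hA
  have hAE : A * Real.exp t = Real.exp (β / 2) := by
    rw [hA, ← Real.exp_add, ht]; ring_nf
  have hA2 : A * A = Real.exp α := by rw [hA, ← Real.exp_add]; ring_nf
  have hB2 : Real.exp (β / 2) * Real.exp (β / 2) = Real.exp β := by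
    rw [← Real.exp_add]; ring_nf
  have hApos : 0 < A := Real.exp_pos _
  have hkey := aux_key_stmt1 t
  have h5 : 0 ≤ (A * A) * ((Real.exp t - 1) * (t * (Real.exp t + 1) - 2 * (Real.exp t - 1))) :=
    mul_nonneg (by positivity) hkey
  have hβα : β - α = 2 * t := by rw [ht]; ring
  rw [← hA2, ← hB2, ← hAE, hβα]
  nlinarith [h5]
end

section
/- For all real numbers α, β ≥ 0 and every real p > 1, ((1+α)^p - (1+β)^p)*(α - β) ≥ (4p/(p+1)^2) * ((1+α)^{(p+1)/2} - (1+β)^{(p+1)/2})^2. -/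
open Real Set

/-- Bernoulli-type: for `0 < b ≤ x` and `1 ≤ q`, `x^q - b^q ≤ q * x^(q-1) * (x - b)`. -/
lemma bern_aux {q b x : ℝ} (hq : 1 ≤ q) (hb : 0 < b) (hbx : b ≤ x) :
    x ^ q - b ^ q ≤ q * x ^ (q - 1) * (x - b) := by
  have hx : 0 < x := hb.trans_le hbx
  have hs : -1 ≤ b / x - 1 := by
    have : 0 < b / x := div_pos hb hx
    linarith
  have h1 : 1 + q * (b / x - 1) ≤ (1 + (b / x - 1)) ^ q :=
    one_add_mul_self_le_rpow_one_add hs hq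
  rw [show (1 : ℝ) + (b / x - 1) = b / x by ring, Real.div_rpow hb.le hx.le] at h1
  have hxq : x ^ q = x ^ (q - 1) * x := by
    rw [← Real.rpow_add_one hx.ne' (q - 1)]; ring_nf
  have h3 : x ^ q * (1 + q * (b / x - 1)) ≤ b ^ q := by
    have := mul_le_mul_of_nonneg_left h1 (Real.rpow_nonneg hx.le q)
    rwa [mul_div_cancel₀ _ (by positivity : x ^ q ≠ 0)] at this
  have h4 : x ^ q * (b / x) = x ^ (q - 1) * b := by
    rw [hxq]; field_simp
  nlinarith [h3, h4, hxq]

lemma key_aux {p b a : ℝ} (hp : 1 < p) (hb : 0 < b) (hab : b ≤ a) :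
    4 * p / (p + 1) ^ 2 * (a ^ ((p + 1) / 2) - b ^ ((p + 1) / 2)) ^ 2
      ≤ (a ^ p - b ^ p) * (a - b) := by
  set q : ℝ := (p + 1) / 2 with hqdef
  have hq1 : 1 < q := by rw [hqdef]; linarith
  have hq0 : q ≠ 0 := by positivity
  have hc : 4 * p / (p + 1) ^ 2 = p / q ^ 2 := by
    rw [hqdef]; field_simp; ring
  rw [hc]
  -- functions
  set F : ℝ → ℝ := fun x => (x ^ p - b ^ p) * (x - b) - p / q ^ 2 * (x ^ q - b ^ q) ^ 2 with hF
  set G : ℝ → ℝ := fun x => p * x ^ (p - 1) * (x - b) + (x ^ p - b ^ p)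
      - 2 * p / q * (x ^ q - b ^ q) * x ^ (q - 1) with hG
  have hFderiv : ∀ x : ℝ, 0 < x → HasDerivAt F (G x) x := by
    intro x hx
    have h1 : HasDerivAt (fun y : ℝ => y ^ p) (p * x ^ (p - 1)) x :=
      Real.hasDerivAt_rpow_const (Or.inl hx.ne')
    have h2 : HasDerivAt (fun y : ℝ => y ^ q) (q * x ^ (q - 1)) x :=
      Real.hasDerivAt_rpow_const (Or.inl hx.ne')
    have hd : HasDerivAt F ((p * x ^ (p - 1)) * (x - b) + (x ^ p - b ^ p) * 1
        - p / q ^ 2 * (2 * (x ^ q - b ^ q) ^ 1 * (q * x ^ (q - 1)))) x := by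
      exact ((h1.sub_const (b ^ p)).mul ((hasDerivAt_id x).sub_const b)).sub
        ((((h2.sub_const (b ^ q)).pow 2)).const_mul (p / q ^ 2))
    convert hd using 1
    rw [hG]; field_simp
  have hGderiv : ∀ x : ℝ, 0 < x →
      HasDerivAt G (p * (p - 1) * x ^ (p - 2) * (x - b)
        - 2 * p * (q - 1) / q * x ^ (q - 2) * (x ^ q - b ^ q)) x := by
    intro x hx
    have h1 : HasDerivAt (fun y : ℝ => y ^ (p - 1)) ((p - 1) * x ^ (p - 1 - 1)) x :=
      Real.hasDerivAt_rpow_const (Or.inl hx.ne')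
    have h2 : HasDerivAt (fun y : ℝ => y ^ q) (q * x ^ (q - 1)) x :=
      Real.hasDerivAt_rpow_const (Or.inl hx.ne')
    have h3 : HasDerivAt (fun y : ℝ => y ^ (q - 1)) ((q - 1) * x ^ (q - 1 - 1)) x :=
      Real.hasDerivAt_rpow_const (Or.inl hx.ne')
    have h4 : HasDerivAt (fun y : ℝ => y ^ p) (p * x ^ (p - 1)) x :=
      Real.hasDerivAt_rpow_const (Or.inl hx.ne')
    have hd : HasDerivAt G
        (((p * ((p - 1) * x ^ (p - 1 - 1))) * (x - b) + (p * x ^ (p - 1)) * 1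
          + p * x ^ (p - 1))
         - ((2 * p / q * (q * x ^ (q - 1))) * x ^ (q - 1)
            + (2 * p / q * (x ^ q - b ^ q)) * ((q - 1) * x ^ (q - 1 - 1)))) x := by
      exact (((h1.const_mul p).mul ((hasDerivAt_id x).sub_const b)).add
          (h4.sub_const (b ^ p))).sub
        (((h2.sub_const (b ^ q)).const_mul (2 * p / q)).mul h3)
    convert hd using 1
    have e1 : x ^ (q - 1) * x ^ (q - 1) = x ^ (p - 1) := by
      rw [← Real.rpow_add hx]; norm_num [hqdef]; ring_nf
    have e2 : p - 1 - 1 = p - 2 := by ring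
    have e3 : q - 1 - 1 = q - 2 := by ring
    rw [e2, e3]
    field_simp
    linear_combination (2*p*q - (p^2 - 1)) * e1
  -- second derivative nonneg on [b, ∞)
  have hDnonneg : ∀ x : ℝ, b ≤ x → 0 ≤ p * (p - 1) * x ^ (p - 2) * (x - b)
      - 2 * p * (q - 1) / q * x ^ (q - 2) * (x ^ q - b ^ q) := by
    intro x hbx
    have hx : 0 < x := hb.trans_le hbx
    have hbern := bern_aux hq1.le hb hbx
    have e1 : x ^ (q - 2) * x ^ (q - 1) = x ^ (p - 2) := by
      rw [← Real.rpow_add hx]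
      congr 1
      rw [hqdef]; ring
    have hq2 : (0:ℝ) ≤ x ^ (q - 2) := Real.rpow_nonneg hx.le _
    have hcoef : 0 ≤ 2 * p * (q - 1) / q := div_nonneg (by nlinarith) (by linarith)
    have h5 : 2 * p * (q - 1) / q * x ^ (q - 2) * (x ^ q - b ^ q)
        ≤ 2 * p * (q - 1) / q * x ^ (q - 2) * (q * x ^ (q - 1) * (x - b)) := by
      exact mul_le_mul_of_nonneg_left hbern (mul_nonneg hcoef hq2)
    have h6 : 2 * p * (q - 1) / q * x ^ (q - 2) * (q * x ^ (q - 1) * (x - b))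
        = p * (p - 1) * x ^ (p - 2) * (x - b) := by
      have hq21 : q * 2 - 2 = p - 1 := by rw [hqdef]; ring
      field_simp
      linear_combination (2 * p * (q - 1) * q * (x - b) + (3 * p / 2 - p ^ 3 / 2 - 1) * (x - b)) * e1 - (x ^ (p-2) * (x-b) * p * q) * (hq21.symm ▸ rfl : (q*2-2:ℝ) = q*2-2)
    nlinarith [h5, h6]
  -- G is monotone on [b, ∞), G b = 0, so G ≥ 0 there
  have hGb : G b = 0 := by simp [hG]
  have hGmono : MonotoneOn G (Ici b) := by
    apply monotoneOn_of_deriv_nonneg (convex_Ici b)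
    · intro x hx
      exact (hGderiv x (hb.trans_le hx)).differentiableAt.continuousAt.continuousWithinAt
    · intro x hx
      rw [interior_Ici] at hx
      exact (hGderiv x (hb.trans (mem_Ioi.mp hx))).differentiableAt.differentiableWithinAt
    · intro x hx
      rw [interior_Ici] at hx
      have hx' := hb.trans (mem_Ioi.mp hx)
      rw [(hGderiv x hx').deriv]
      exact hDnonneg x (le_of_lt (mem_Ioi.mp hx))
  have hGnonneg : ∀ x : ℝ, b ≤ x → 0 ≤ G x := by
    intro x hx
    have := hGmono (self_mem_Ici) (mem_Ici.mpr hx) hx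
    rwa [hGb] at this
  -- F is monotone on [b, ∞), F b = 0, so F a ≥ 0
  have hFb : F b = 0 := by simp [hF]
  have hFmono : MonotoneOn F (Ici b) := by
    apply monotoneOn_of_deriv_nonneg (convex_Ici b)
    · intro x hx
      exact (hFderiv x (hb.trans_le hx)).differentiableAt.continuousAt.continuousWithinAt
    · intro x hx
      rw [interior_Ici] at hx
      exact (hFderiv x (hb.trans (mem_Ioi.mp hx))).differentiableAt.differentiableWithinAt
    · intro x hx
      rw [interior_Ici] at hx
      have hx' := hb.trans (mem_Ioi.mp hx)
      rw [(hFderiv x hx').deriv]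
      exact hGnonneg x (le_of_lt (mem_Ioi.mp hx))
  have hFa : 0 ≤ F a := by
    have := hFmono self_mem_Ici (mem_Ici.mpr hab) hab
    rw [hFb] at this
    exact this
  rw [hF] at hFa
  simp only at hFa
  linarith

theorem stmt_3 (α β p : ℝ) (hα : 0 ≤ α) (hβ : 0 ≤ β) (hp : 1 < p) :
    ((1 + α) ^ p - (1 + β) ^ p) * (α - β)
      ≥ (4 * p / (p + 1) ^ 2) * ((1 + α) ^ ((p + 1) / 2) - (1 + β) ^ ((p + 1) / 2)) ^ 2 := by
  rcases le_total β α with h | h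
  · have := key_aux hp (by linarith : (0:ℝ) < 1 + β) (by linarith : 1 + β ≤ 1 + α)
    have e : (1 + α) - (1 + β) = α - β := by ring
    rw [e] at this
    exact this
  · have := key_aux hp (by linarith : (0:ℝ) < 1 + α) (by linarith : 1 + α ≤ 1 + β)
    have e : (1 + β) - (1 + α) = β - α := by ring
    rw [e] at this
    nlinarith [this]
end

section
/- For all real numbers α, β ∈ [0,1) and every real p > 1, ((1-α)^{-p} - (1-β)^{-p})*(α - β) ≥ (4p/(p-1)^2) * ((1-α)^{(1-p)/2} - (1-β)^{(1-p)/2})^2. -/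
-- Lemma A: u^a + u^(-a) is monotone in a for u ≥ 1
lemma lemA (u a b : ℝ) (hu : 1 ≤ u) (ha : 0 ≤ a) (hab : a ≤ b) :
    u ^ a + u ^ (-a) ≤ u ^ b + u ^ (-b) := by
  have hu0 : (0:ℝ) < u := lt_of_lt_of_le one_pos hu
  have hA : (1:ℝ) ≤ u ^ a := Real.one_le_rpow hu ha
  have hB : (1:ℝ) ≤ u ^ b := Real.one_le_rpow hu (ha.trans hab)
  have hAB : u ^ a ≤ u ^ b := Real.rpow_le_rpow_of_exponent_le hu hab
  rw [Real.rpow_neg hu0.le, Real.rpow_neg hu0.le]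
  have hA0 : (0:ℝ) < u ^ a := lt_of_lt_of_le one_pos hA
  have hB0 : (0:ℝ) < u ^ b := lt_of_lt_of_le one_pos hB
  have e1 : u ^ a * (u ^ a)⁻¹ = 1 := mul_inv_cancel₀ (ne_of_gt hA0)
  have e2 : u ^ b * (u ^ b)⁻¹ = 1 := mul_inv_cancel₀ (ne_of_gt hB0)
  have h3 : (1:ℝ) ≤ u ^ a * u ^ b := one_le_mul_of_one_le_of_one_le hA hB
  nlinarith [mul_nonneg (sub_nonneg.2 hAB) (sub_nonneg.2 h3), mul_pos hA0 hB0]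


-- Lemma B': w^c - w^(-c) ≥ c (w - w⁻¹) for w ≥ 1, c ≥ 1
lemma lemB' (w c : ℝ) (hw : 1 ≤ w) (hc : 1 ≤ c) :
    c * (w - w⁻¹) ≤ w ^ c - w ^ (-c) := by
  set f : ℝ → ℝ := fun t => t ^ c - t ^ (-c) - c * t + c * t⁻¹ with hf
  have hder : ∀ t : ℝ, 1 ≤ t →
      HasDerivAt f (c * t ^ (c-1) + c * t ^ (-c-1) - c - c * (t^2)⁻¹) t := by
    intro t ht
    have ht0 : t ≠ 0 := by linarith
    have h1 := Real.hasDerivAt_rpow_const (x := t) (p := c) (Or.inl ht0)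
    have h2 := Real.hasDerivAt_rpow_const (x := t) (p := -c) (Or.inl ht0)
    have h3 : HasDerivAt (fun y : ℝ => c * y) (c * 1) t := (hasDerivAt_id t).const_mul c
    have h4 : HasDerivAt (fun y : ℝ => c * y⁻¹) (c * (-(t^2)⁻¹)) t :=
      (hasDerivAt_inv ht0).const_mul c
    refine (((h1.sub h2).sub h3).add h4).congr_deriv ?_
    ring
  have hmono : MonotoneOn f (Set.Ici 1) := by
    apply monotoneOn_of_deriv_nonneg (convex_Ici 1)
    · exact fun t ht => (hder t ht).continuousAt.continuousWithinAt
    · intro t ht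
      rw [interior_Ici] at ht
      exact (hder t ht.le).differentiableAt.differentiableWithinAt
    · intro t ht
      rw [interior_Ici] at ht
      rw [(hder t ht.le).deriv]
      have ht0 : (0:ℝ) < t := lt_trans one_pos ht
      have key : t + t⁻¹ ≤ t ^ c + t ^ (-c) := by
        have := lemA t 1 c ht.le zero_le_one hc
        rwa [Real.rpow_one, Real.rpow_neg_one] at this
      have e1 : t ^ (c-1) = t ^ c / t := by
        rw [Real.rpow_sub ht0, Real.rpow_one]
      have e2 : t ^ (-c-1) = t ^ (-c) / t := by
        rw [Real.rpow_sub ht0, Real.rpow_one]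
      have e3 : c * t ^ (c-1) + c * t ^ (-c-1) - c - c * (t^2)⁻¹
          = (c/t) * ((t ^ c + t ^ (-c)) - (t + t⁻¹)) := by
        rw [e1, e2]; field_simp; ring
      rw [e3]
      have hc0 : (0:ℝ) < c := lt_of_lt_of_le one_pos hc
      exact mul_nonneg (by positivity) (sub_nonneg.2 key)
  have h := hmono (Set.mem_Ici.2 le_rfl) (Set.mem_Ici.2 hw) hw
  have hf1 : f 1 = 0 := by simp [hf]
  have hfw : f w = w ^ c - w ^ (-c) - c * w + c * w⁻¹ := rfl
  rw [hf1, hfw] at h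
  linarith

-- Lemma B: a(u^b - u^(-b)) ≥ b(u^a - u^(-a)) for u ≥ 1, 0 < a ≤ b
lemma lemB (u a b : ℝ) (hu : 1 ≤ u) (ha : 0 < a) (hab : a ≤ b) :
    b * (u ^ a - u ^ (-a)) ≤ a * (u ^ b - u ^ (-b)) := by
  have hu0 : (0:ℝ) < u := lt_of_lt_of_le one_pos hu
  set w := u ^ a with hwdef
  have hw : 1 ≤ w := Real.one_le_rpow hu ha.le
  have hc : 1 ≤ b / a := (one_le_div ha).2 hab
  have hwc : w ^ (b/a) = u ^ b := by
    rw [hwdef, ← Real.rpow_mul hu0.le, mul_div_cancel₀ _ (ne_of_gt ha)]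
  have hwc' : w ^ (-(b/a)) = u ^ (-b) := by
    rw [hwdef, ← Real.rpow_mul hu0.le]
    congr 1
    field_simp
  have hwi : w⁻¹ = u ^ (-a) := by
    rw [hwdef, ← Real.rpow_neg_one (u ^ a), ← Real.rpow_mul hu0.le, mul_neg_one]
  have h := lemB' w (b/a) hw hc
  rw [hwc, hwc', hwi, hwdef] at h
  have h2 := mul_le_mul_of_nonneg_left h (le_of_lt ha)
  calc b * (u ^ a - u ^ (-a)) = a * (b/a * (u ^ a - u ^ (-a))) := by
        field_simp
    _ ≤ a * (u ^ b - u ^ (-b)) := h2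

-- Key product lemma
lemma lemK (u m : ℝ) (hu : 1 ≤ u) (hm : 0 < m) :
    (2*m+1) * (u ^ m - u ^ (-m))^2
      ≤ m^2 * ((u ^ (2*m+1) - u ^ (-(2*m+1))) * (u - u⁻¹)) := by
  have hu0 : (0:ℝ) < u := lt_of_lt_of_le one_pos hu
  set b := u ^ m with hbdef
  have hb : 1 ≤ b := Real.one_le_rpow hu hm.le
  have hb0 : (0:ℝ) < b := lt_of_lt_of_le one_pos hb
  have c1 : u ^ (m+1) = b * u := by rw [Real.rpow_add hu0, Real.rpow_one]
  have c2 : u ^ (-(m+1)) = (b * u)⁻¹ := by rw [Real.rpow_neg hu0.le, c1]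
  have c3 : u ^ (2*m+1) = b^2 * u := by
    rw [Real.rpow_add hu0, Real.rpow_one, two_mul, Real.rpow_add hu0, ← hbdef, sq]
  have c4 : u ^ (-(2*m+1)) = (b^2 * u)⁻¹ := by rw [Real.rpow_neg hu0.le, c3]
  have c5 : u ^ (-m) = b⁻¹ := by rw [Real.rpow_neg hu0.le, hbdef]
  have hB := lemB u m (m+1) hu hm (by linarith)
  rw [c1, c2, c5] at hB
  rw [c3, c4, c5]
  have hX : (0:ℝ) ≤ b - b⁻¹ := by
    have : b⁻¹ ≤ 1 := inv_le_one_of_one_le₀ hb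
    linarith
  have hsq : ((m+1) * (b - b⁻¹))^2 ≤ (m * (b*u - (b*u)⁻¹))^2 :=
    pow_le_pow_left₀ (by positivity) hB 2
  have hid : (b*u - (b*u)⁻¹)^2
      = (b^2*u - (b^2*u)⁻¹) * (u - u⁻¹) + (b - b⁻¹)^2 := by
    field_simp
    ring
  nlinarith [hsq, hid]

set_option maxHeartbeats 1000000 in
lemma mainhalf (x y p : ℝ) (hx : 0 < x) (hxy : x ≤ y) (hp : 1 < p) :
    4*p/(p-1)^2 * (x ^ ((1-p)/2) - y ^ ((1-p)/2))^2
      ≤ (x ^ (-p) - y ^ (-p)) * (y - x) := by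
  have hy : 0 < y := lt_of_lt_of_le hx hxy
  set u := Real.sqrt (y/x) with hudef
  have hu : 1 ≤ u := by
    rw [hudef, show (1:ℝ) = Real.sqrt 1 from Real.sqrt_one.symm]
    exact Real.sqrt_le_sqrt ((one_le_div hx).2 hxy)
  have hu0 : (0:ℝ) < u := lt_of_lt_of_le one_pos hu
  have hu2 : u^2 = y/x := Real.sq_sqrt (by positivity)
  have hyx : y = x * u^2 := by rw [hu2]; field_simp
  set m := (p-1)/2 with hmdef
  have hm : 0 < m := by rw [hmdef]; linarith
  set b := u ^ m with hbdef
  have hb : 1 ≤ b := Real.one_le_rpow hu hm.le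
  have hb0 : (0:ℝ) < b := lt_of_lt_of_le one_pos hb
  have hP : ∀ e : ℝ, (x * u^2) ^ e = x ^ e * (u ^ e)^2 := by
    intro e
    rw [Real.mul_rpow hx.le (by positivity)]
    congr 1
    rw [← Real.rpow_natCast u 2, ← Real.rpow_mul hu0.le, mul_comm ((2:ℕ):ℝ) e,
      Real.rpow_mul hu0.le, Real.rpow_natCast]
  have hA : u ^ (-p) = (b^2*u)⁻¹ := by
    have hpm : p = 2*m+1 := by rw [hmdef]; ring
    rw [hpm, Real.rpow_neg hu0.le]
    congr 1
    rw [Real.rpow_add hu0, Real.rpow_one, two_mul, Real.rpow_add hu0, ← hbdef, sq]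
  have hBe : u ^ ((1-p)/2) = b⁻¹ := by
    have h : (1-p)/2 = -m := by rw [hmdef]; ring
    rw [h, Real.rpow_neg hu0.le, hbdef]
  set X := x ^ ((1-p)/2) with hXdef
  have hX0 : (0:ℝ) < X := Real.rpow_pos_of_pos hx _
  have hXX : x ^ (-p) * x = X^2 := by
    have h1 : x ^ (1-p) = x ^ (-p) * x := by
      rw [show (1:ℝ)-p = -p + 1 by ring, Real.rpow_add hx, Real.rpow_one]
    have h2 : X^2 = x ^ (1-p) := by
      rw [hXdef, ← Real.rpow_natCast (x ^ ((1-p)/2)) 2, ← Real.rpow_mul hx.le]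
      norm_num
    rw [h2, h1]
  have E1 : y ^ (-p) = x ^ (-p) * ((b^2*u)⁻¹)^2 := by rw [hyx, hP, hA]
  have E3 : y ^ ((1-p)/2) = X * (b⁻¹)^2 := by rw [hyx, hP, hBe, hXdef]
  have Ey : y - x = x * (u^2 - 1) := by rw [hyx]; ring
  rw [E1, E3, Ey]
  have K := lemK u m hu hm
  have k1 : u ^ (2*m+1) = b^2*u := by
    rw [Real.rpow_add hu0, Real.rpow_one, two_mul, Real.rpow_add hu0, ← hbdef, sq]
  have k2 : u ^ (-(2*m+1)) = (b^2*u)⁻¹ := by rw [Real.rpow_neg hu0.le, k1]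
  have k3 : u ^ (-m) = b⁻¹ := by rw [Real.rpow_neg hu0.le, hbdef]
  rw [k1, k2, k3] at K
  have hp1 : p - 1 ≠ 0 := by linarith
  have hc : 4*p/(p-1)^2 = (2*m+1)/m^2 := by
    rw [hmdef]; field_simp; ring
  rw [hc]
  have eR : (x^(-p) - x^(-p)*((b^2*u)⁻¹)^2) * (x*(u^2-1))
      = X^2 * ((1 - ((b^2*u)⁻¹)^2)*(u^2-1)) := by
    rw [← hXX]; ring
  have eL : (X - X*(b⁻¹)^2)^2 = X^2 * (1 - (b⁻¹)^2)^2 := by ring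
  rw [eR, eL]
  rw [div_mul_eq_mul_div, div_le_iff₀ (by positivity)]
  have eq1 : (1 - (b⁻¹)^2)^2 = (b⁻¹)^2 * (b-b⁻¹)^2 := by field_simp
  have eq2 : (1 - ((b^2*u)⁻¹)^2)*(u^2-1)
      = (b⁻¹)^2 * ((b^2*u - (b^2*u)⁻¹)*(u-u⁻¹)) := by field_simp
  rw [eq1, eq2]
  have K2 := mul_le_mul_of_nonneg_left K (by positivity : (0:ℝ) ≤ X^2 * (b⁻¹)^2)
  nlinarith [K2]

theorem stmt_4 (α β p : ℝ) (hα : α ∈ Set.Ico (0 : ℝ) 1) (hβ : β ∈ Set.Ico (0 : ℝ) 1)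
    (hp : 1 < p) :
    ((1 - α) ^ (-p) - (1 - β) ^ (-p)) * (α - β)
      ≥ (4 * p / (p - 1) ^ 2) * ((1 - α) ^ ((1 - p) / 2) - (1 - β) ^ ((1 - p) / 2)) ^ 2 := by
  obtain ⟨hα0, hα1⟩ := hα
  obtain ⟨hβ0, hβ1⟩ := hβ
  rw [ge_iff_le]
  rcases le_total α β with h | h
  · have H := mainhalf (1-β) (1-α) p (by linarith) (by linarith) hp
    calc (4 * p / (p - 1) ^ 2) * ((1 - α) ^ ((1 - p) / 2) - (1 - β) ^ ((1 - p) / 2)) ^ 2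
        = 4*p/(p-1)^2 * ((1 - β) ^ ((1 - p) / 2) - (1 - α) ^ ((1 - p) / 2)) ^ 2 := by ring
      _ ≤ ((1 - β) ^ (-p) - (1 - α) ^ (-p)) * ((1 - α) - (1 - β)) := H
      _ = ((1 - α) ^ (-p) - (1 - β) ^ (-p)) * (α - β) := by ring
  · have H := mainhalf (1-α) (1-β) p (by linarith) (by linarith) hp
    calc (4 * p / (p - 1) ^ 2) * ((1 - α) ^ ((1 - p) / 2) - (1 - β) ^ ((1 - p) / 2)) ^ 2
        ≤ ((1 - α) ^ (-p) - (1 - β) ^ (-p)) * ((1 - β) - (1 - α)) := H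
      _ = ((1 - α) ^ (-p) - (1 - β) ^ (-p)) * (α - β) := by ring
end

section
/- For all real numbers α, β ≥ 0 and every real t > 1, ((1+α)^t - (1+β)^t)*(α - β) ≥ (4t/(t+1)^2) * ((1+α)^{(t+1)/2} - (1+β)^{(t+1)/2})^2. -/
open Real

private lemma key_cosh (t x : ℝ) (ht : 1 < t) :
    (t+1)^2 * Real.cosh ((t-1)*x) ≤ (t-1)^2 * Real.cosh ((t+1)*x) + 4*t := by
  have h1 := Real.hasSum_cosh ((t+1)*x)
  have h2 := Real.hasSum_cosh ((t-1)*x)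
  have h := (h1.mul_left ((t-1)^2)).sub (h2.mul_left ((t+1)^2))
  have hge := le_hasSum h 0 ?_
  · simp at hge
    linarith
  · intro j hj
    obtain ⟨m, rfl⟩ : ∃ m, j = m + 1 := ⟨j - 1, (Nat.succ_pred_eq_of_pos (Nat.pos_of_ne_zero hj)).symm⟩
    have hfac : (0:ℝ) < ((2*(m+1)).factorial : ℝ) := by positivity
    have hexp : ∀ c : ℝ, (c*x)^(2*(m+1)) = (c^2*x^2)^(m+1) := by
      intro c
      rw [pow_mul, mul_pow]
    have hp : (0:ℝ) ≤ (t-1)^2 := sq_nonneg _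
    have hpq : (t-1)^2 ≤ (t+1)^2 := by nlinarith
    have hkey : (t+1)^2 * ((t-1)*x)^(2*(m+1)) ≤ (t-1)^2 * ((t+1)*x)^(2*(m+1)) := by
      rw [hexp, hexp, mul_pow, mul_pow]
      have hm := pow_le_pow_left₀ hp hpq m
      have hxm : (0:ℝ) ≤ (x^2) ^ (m+1) := pow_nonneg (sq_nonneg _) (m+1)
      have step : (t+1)^2 * ((t-1)^2)^(m+1) ≤ (t-1)^2 * ((t+1)^2)^(m+1) := by
        rw [pow_succ, pow_succ]
        calc (t+1)^2 * (((t-1)^2)^m * (t-1)^2)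
            = (t-1)^2 * (t+1)^2 * ((t-1)^2)^m := by ring
          _ ≤ (t-1)^2 * (t+1)^2 * ((t+1)^2)^m := by
              exact mul_le_mul_of_nonneg_left hm (by positivity)
          _ = (t-1)^2 * (((t+1)^2)^m * (t+1)^2) := by ring
      calc (t+1)^2 * (((t-1)^2)^(m+1) * (x^2)^(m+1))
          = ((t+1)^2 * ((t-1)^2)^(m+1)) * (x^2)^(m+1) := by ring
        _ ≤ ((t-1)^2 * ((t+1)^2)^(m+1)) * (x^2)^(m+1) :=
            mul_le_mul_of_nonneg_right step hxm
        _ = (t-1)^2 * (((t+1)^2)^(m+1) * (x^2)^(m+1)) := by ring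
    have hdiv : (t+1)^2 * (((t-1)*x)^(2*(m+1)) / ((2*(m+1)).factorial : ℝ))
        ≤ (t-1)^2 * (((t+1)*x)^(2*(m+1)) / ((2*(m+1)).factorial : ℝ)) := by
      rw [mul_div_assoc', mul_div_assoc', div_le_div_iff₀ hfac hfac]
      nlinarith [hkey, hfac]
    simpa using sub_nonneg.2 hdiv

private lemma key_sinh (t x : ℝ) (ht : 1 < t) :
    4*t/(t+1)^2 * Real.sinh ((t+1)/2*x)^2 ≤ Real.sinh (t*x) * Real.sinh x := by
  have ht1 : (0:ℝ) < (t+1)^2 := by positivity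
  have hid1 : Real.cosh ((t+1)*x) - Real.cosh ((t-1)*x)
      = 2 * Real.sinh (t*x) * Real.sinh x := by
    have e1 : (t+1)*x = t*x + x := by ring
    have e2 : (t-1)*x = t*x - x := by ring
    rw [e1, e2, Real.cosh_add, Real.cosh_sub]; ring
  have hid2 : Real.cosh ((t+1)*x) = 2 * Real.sinh ((t+1)/2*x)^2 + 1 := by
    have e : (t+1)*x = 2*((t+1)/2*x) := by ring
    rw [e, Real.cosh_two_mul, Real.cosh_sq]; ring
  have hk := key_cosh t x ht
  have hC0 : Real.cosh ((t-1)*x)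
      = 2*Real.sinh ((t+1)/2*x)^2 + 1 - 2*Real.sinh (t*x) * Real.sinh x := by
    linarith
  rw [hC0, hid2] at hk
  rw [div_mul_eq_mul_div, div_le_iff₀ ht1]
  nlinarith [hk]

private lemma exp_diff (c a b : ℝ) :
    Real.exp (c*a) - Real.exp (c*b)
      = 2 * Real.exp (c*(a+b)/2) * Real.sinh (c*(a-b)/2) := by
  have h1 : c*a = c*(a+b)/2 + c*(a-b)/2 := by ring
  have h2 : c*b = c*(a+b)/2 + -(c*(a-b)/2) := by ring
  rw [h1, h2, Real.exp_add, Real.exp_add, Real.sinh_eq]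
  ring

private lemma main_exp (t a b : ℝ) (ht : 1 < t) :
    4*t/(t+1)^2 * (Real.exp ((t+1)/2*a) - Real.exp ((t+1)/2*b))^2
      ≤ (Real.exp (t*a) - Real.exp (t*b)) * (Real.exp a - Real.exp b) := by
  have hk := key_sinh t ((a-b)/2) ht
  have hA := exp_diff t a b
  have hB := exp_diff 1 a b
  have hC := exp_diff ((t+1)/2) a b
  simp only [one_mul] at hB
  have hP : Real.exp ((t+1)/2*(a+b)/2)^2
      = Real.exp (t*(a+b)/2) * Real.exp ((a+b)/2) := by
    rw [sq, ← Real.exp_add, ← Real.exp_add]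
    congr 1; ring
  have e1 : (t+1)/2*(a-b)/2 = (t+1)/2*((a-b)/2) := by ring
  have e2 : t*(a-b)/2 = t*((a-b)/2) := by ring
  rw [hA, hB, hC, e1, e2]
  have hq : (0:ℝ) ≤ Real.exp ((t+1)/2*(a+b)/2)^2 := sq_nonneg _
  have hmul := mul_le_mul_of_nonneg_left hk hq
  have expand1 : 4*t/(t+1)^2 * (2 * Real.exp ((t+1)/2*(a+b)/2)
        * Real.sinh ((t+1)/2*((a-b)/2)))^2
      = 4 * (Real.exp ((t+1)/2*(a+b)/2)^2
        * (4*t/(t+1)^2 * Real.sinh ((t+1)/2*((a-b)/2))^2)) := by ring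
  have expand2 : 2 * Real.exp (t*(a+b)/2) * Real.sinh (t*((a-b)/2))
        * (2 * Real.exp ((a+b)/2) * Real.sinh ((a-b)/2))
      = 4 * (Real.exp ((t+1)/2*(a+b)/2)^2
        * (Real.sinh (t*((a-b)/2)) * Real.sinh ((a-b)/2))) := by
    rw [hP]; ring
  rw [expand1, expand2]
  linarith [hmul]

theorem stmt_5 (α β t : ℝ) (hα : 0 ≤ α) (hβ : 0 ≤ β) (ht : 1 < t) :
    ((1 + α) ^ t - (1 + β) ^ t) * (α - β)
      ≥ (4 * t / (t + 1) ^ 2) * ((1 + α) ^ ((t + 1) / 2) - (1 + β) ^ ((t + 1) / 2)) ^ 2 := by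
  have h1 : (0:ℝ) < 1 + α := by linarith
  have h2 : (0:ℝ) < 1 + β := by linarith
  have ha : (1+α) = Real.exp (Real.log (1+α)) := (Real.exp_log h1).symm
  have hb : (1+β) = Real.exp (Real.log (1+β)) := (Real.exp_log h2).symm
  have hu : (1+α) ^ t = Real.exp (t * Real.log (1+α)) := by
    rw [Real.rpow_def_of_pos h1, mul_comm]
  have hv : (1+β) ^ t = Real.exp (t * Real.log (1+β)) := by
    rw [Real.rpow_def_of_pos h2, mul_comm]
  have hus : (1+α) ^ ((t+1)/2) = Real.exp ((t+1)/2 * Real.log (1+α)) := by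
    rw [Real.rpow_def_of_pos h1, mul_comm]
  have hvs : (1+β) ^ ((t+1)/2) = Real.exp ((t+1)/2 * Real.log (1+β)) := by
    rw [Real.rpow_def_of_pos h2, mul_comm]
  have hab : α - β = Real.exp (Real.log (1+α)) - Real.exp (Real.log (1+β)) := by
    rw [← ha, ← hb]; ring
  rw [ge_iff_le, hu, hv, hus, hvs, hab]
  exact main_exp t (Real.log (1+α)) (Real.log (1+β)) ht
end

section
/- For all real numbers α, β ∈ [0,1) and every real t > 1, ((1-α)^{-t} - (1-β)^{-t})*(α - β) ≥ (4t/(t-1)^2) * ((1-α)^{(1-t)/2} - (1-β)^{(1-t)/2})^2. -/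
open intervalIntegral MeasureTheory Set

private lemma cs_integral (a b : ℝ) (hab : a ≤ b) (f : ℝ → ℝ)
    (hf : ContinuousOn f (Set.Icc a b)) :
    (∫ x in a..b, f x) ^ 2 ≤ (b - a) * ∫ x in a..b, (f x) ^ 2 := by
  rcases eq_or_lt_of_le hab with rfl | hlt
  · simp
  · have hf' : ContinuousOn f (Set.uIcc a b) := by rwa [Set.uIcc_of_le hab]
    have h1 : IntervalIntegrable f volume a b := hf'.intervalIntegrable
    have h2 : IntervalIntegrable (fun x => (f x) ^ 2) volume a b :=
      (hf'.pow 2).intervalIntegrable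
    set I := ∫ x in a..b, f x with hI
    set J := ∫ x in a..b, (f x) ^ 2 with hJ
    set c : ℝ := I / (b - a) with hc
    have hba : (0:ℝ) < b - a := by linarith
    have hcb : c * (b - a) = I := div_mul_cancel₀ _ (ne_of_gt hba)
    have h0 : 0 ≤ ∫ x in a..b, (f x - c) ^ 2 :=
      intervalIntegral.integral_nonneg hab (fun x _ => sq_nonneg _)
    have hexp : ∫ x in a..b, (f x - c) ^ 2 = J - 2 * c * I + c ^ 2 * (b - a) := by
      have heq : ∀ x, (f x - c) ^ 2 = (f x) ^ 2 - 2 * c * f x + c ^ 2 := by intro x; ring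
      simp_rw [heq]
      rw [intervalIntegral.integral_add (h2.sub ((h1.const_mul (2 * c))))
        intervalIntegrable_const,
        intervalIntegral.integral_sub h2 (h1.const_mul (2 * c)),
        intervalIntegral.integral_const_mul, intervalIntegral.integral_const]
      simp [smul_eq_mul]; ring
    rw [hexp] at h0
    nlinarith [mul_nonneg hba.le h0, sq_nonneg (c * (b - a) - I)]

private lemma key_ineq (t a b : ℝ) (ha : 0 < a) (hab : a ≤ b) (ht : 1 < t) :
    (4 * t / (t - 1) ^ 2) * (a ^ ((1 - t) / 2) - b ^ ((1 - t) / 2)) ^ 2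
      ≤ (a ^ (-t) - b ^ (-t)) * (b - a) := by
  have hb : 0 < b := lt_of_lt_of_le ha hab
  have ht0 : (0:ℝ) < t := by linarith
  have ht1 : (0:ℝ) < t - 1 := by linarith
  have ht0' : t ≠ 0 := ne_of_gt ht0
  have ht1' : t - 1 ≠ 0 := ne_of_gt ht1
  have hnot : (0:ℝ) ∉ Set.uIcc a b := by
    rw [Set.uIcc_of_le hab]
    intro h; exact absurd h.1 (not_le.mpr ha)
  have hI1 : ∫ x in a..b, x ^ (-(t + 1) / 2) =
      (b ^ ((1 - t) / 2) - a ^ ((1 - t) / 2)) / ((1 - t) / 2) := by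
    rw [integral_rpow (Or.inr ⟨by intro h; nlinarith [h], hnot⟩)]
    norm_num
    ring_nf
  have hI2 : ∫ x in a..b, x ^ (-(t + 1)) = (b ^ (-t) - a ^ (-t)) / (-t) := by
    rw [integral_rpow (Or.inr ⟨by intro h; nlinarith [h], hnot⟩)]
    norm_num
  have hcont : ContinuousOn (fun x : ℝ => x ^ (-(t + 1) / 2)) (Set.Icc a b) := by
    apply ContinuousOn.rpow_const continuousOn_id
    intro x hx
    exact Or.inl (ne_of_gt (lt_of_lt_of_le ha hx.1))
  have hsq : ∫ x in a..b, ((fun x : ℝ => x ^ (-(t + 1) / 2)) x) ^ 2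
      = ∫ x in a..b, x ^ (-(t + 1)) := by
    apply intervalIntegral.integral_congr
    intro x hx
    rw [Set.uIcc_of_le hab] at hx
    have hx0 : 0 < x := lt_of_lt_of_le ha hx.1
    simp only
    rw [sq, ← Real.rpow_add hx0]
    congr 1; ring
  have hcs := cs_integral a b hab (fun x : ℝ => x ^ (-(t + 1) / 2)) hcont
  rw [hsq, hI1, hI2] at hcs
  have hmul := mul_le_mul_of_nonneg_right hcs
    (by positivity : (0:ℝ) ≤ (t - 1) ^ 2 * t)
  have hd2 : ((1 - t) / 2) ^ 2 ≠ 0 := pow_ne_zero 2 (by intro h'; apply ht1'; linarith)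
  have hL : ((b ^ ((1 - t) / 2) - a ^ ((1 - t) / 2)) / ((1 - t) / 2)) ^ 2 * ((t - 1) ^ 2 * t)
      = 4 * t * (b ^ ((1 - t) / 2) - a ^ ((1 - t) / 2)) ^ 2 := by
    rw [div_pow, div_mul_eq_mul_div, div_eq_iff hd2]
    ring
  have hR : (b - a) * ((b ^ (-t) - a ^ (-t)) / (-t)) * ((t - 1) ^ 2 * t)
      = (a ^ (-t) - b ^ (-t)) * (b - a) * (t - 1) ^ 2 := by
    have h : (b ^ (-t) - a ^ (-t)) / (-t) * t = a ^ (-t) - b ^ (-t) := by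
      field_simp
      ring
    calc (b - a) * ((b ^ (-t) - a ^ (-t)) / (-t)) * ((t - 1) ^ 2 * t)
        = (b - a) * ((b ^ (-t) - a ^ (-t)) / (-t) * t) * (t - 1) ^ 2 := by ring
      _ = (a ^ (-t) - b ^ (-t)) * (b - a) * (t - 1) ^ 2 := by rw [h]; ring
  rw [hL, hR] at hmul
  rw [div_mul_eq_mul_div, div_le_iff₀ (by positivity : (0:ℝ) < (t - 1) ^ 2)]
  nlinarith [hmul]

theorem stmt_6 (α β t : ℝ) (hα : α ∈ Set.Ico (0 : ℝ) 1) (hβ : β ∈ Set.Ico (0 : ℝ) 1)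
    (ht : 1 < t) :
    ((1 - α) ^ (-t) - (1 - β) ^ (-t)) * (α - β)
      ≥ (4 * t / (t - 1) ^ 2) * ((1 - α) ^ ((1 - t) / 2) - (1 - β) ^ ((1 - t) / 2)) ^ 2 := by
  rcases le_total α β with h | h
  · have := key_ineq t (1 - β) (1 - α) (by linarith [hβ.2]) (by linarith) ht
    rw [ge_iff_le]
    nlinarith [this]
  · have := key_ineq t (1 - α) (1 - β) (by linarith [hα.2]) (by linarith) ht
    rw [ge_iff_le]
    nlinarith [this]
end

section
/- Let f : ℝ → ℝ be smooth, increasing, convex with f(0) = 1, and suppose liminf_{s→∞} (f''(s))²/(f'''(s) f'(s)) > δ > 0 with f' convex and f''' > 0 on [M,∞). Then for every 0 < δ' < min(δ,1) there exists M' ≥ M such that for all u ≥ M', ∫_0^u (f''(w))^2 dw ≤ (1/δ')·f''(u)·(f'(u) - f'(0)) + C for some constant C depending on M' and f. -/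
open Filter Topology

lemma mono_deriv_nonneg {g : ℝ → ℝ} (hg : Monotone g) (hd : DifferentiableAt ℝ g x) :
    0 ≤ deriv g x := by
  have h := hd.hasDerivAt
  rw [hasDerivAt_iff_tendsto_slope] at h
  have h2 : Tendsto (slope g x) (𝓝[>] x) (𝓝 (deriv g x)) :=
    h.mono_left (nhdsWithin_mono x fun y hy => ne_of_gt hy)
  refine ge_of_tendsto h2 ?_
  filter_upwards [self_mem_nhdsWithin] with y hy
  have hxy : x < y := hy
  have : 0 ≤ g y - g x := sub_nonneg.2 (hg hxy.le)
  have hpos : 0 < y - x := sub_pos.2 hxy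
  rw [slope_def_field]
  exact div_nonneg this hpos.le

theorem stmt_18 (f : ℝ → ℝ) (M δ : ℝ)
    (hf : ContDiff ℝ (⊤ : ℕ∞) f) (hmono : Monotone f) (hconv : ConvexOn ℝ Set.univ f)
    (hf0 : f 0 = 1) (hconv' : ConvexOn ℝ Set.univ (deriv f))
    (hf''' : ∀ s ≥ M, 0 < deriv (deriv (deriv f)) s)
    (hδ : 0 < δ)
    (hliminf : δ < liminf
      (fun s => (deriv (deriv f) s) ^ 2 / (deriv (deriv (deriv f)) s * deriv f s)) atTop) :
    ∀ δ' : ℝ, 0 < δ' → δ' < min δ 1 →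
      ∃ M' ≥ M, ∃ C : ℝ, ∀ u ≥ M',
        (∫ w in (0 : ℝ)..u, (deriv (deriv f) w) ^ 2)
          ≤ (1 / δ') * deriv (deriv f) u * (deriv f u - deriv f 0) + C := by
  intro δ' hδ'0 hδ'
  -- basic smoothness facts
  have hf' : ContDiff ℝ (⊤:ℕ∞) f := hf.of_le (by simp)
  have hd := contDiff_infty_iff_deriv.mp hf'
  have hf1 := hd.2
  have hd1 := contDiff_infty_iff_deriv.mp hf1
  have hf2 := hd1.2
  have hd2 := contDiff_infty_iff_deriv.mp hf2
  set f1 := deriv f with hf1def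
  set f2 := deriv f1 with hf2def
  set f3 := deriv f2 with hf3def
  have hdiff1 : Differentiable ℝ f1 := hd1.1
  have hdiff2 : Differentiable ℝ f2 := hd2.1
  have hcont2 : Continuous f2 := hdiff2.continuous
  -- f1 monotone
  have hf1mono : Monotone f1 := by
    have := hconv.monotoneOn_deriv (fun x _ => hd.1.differentiableAt)
    intro a b hab
    exact this (Set.mem_univ a) (Set.mem_univ b) hab
  -- f2 nonneg
  have hf2nonneg : ∀ x, 0 ≤ f2 x := fun x =>
    mono_deriv_nonneg hf1mono (hdiff1 x)
  set M' := max M 0 with hM'def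
  set c := 1 / δ' with hcdef
  have hc1 : 1 ≤ c := by
    rw [hcdef, le_div_iff₀ hδ'0, one_mul]
    exact (hδ'.trans_le (min_le_right _ _)).le
  -- the function G
  set G : ℝ → ℝ := fun u => c * (f2 u * (f1 u - f1 0)) - ∫ w in (0:ℝ)..u, (f2 w) ^ 2
    with hGdef
  have hint : ∀ u : ℝ, IntervalIntegrable (fun w => (f2 w) ^ 2) MeasureTheory.volume 0 u :=
    fun u => ((hcont2.pow 2).intervalIntegrable 0 u)
  have hGderiv : ∀ x, HasDerivAt G
      (c * (f3 x * (f1 x - f1 0) + f2 x * f2 x) - (f2 x) ^ 2) x := by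
    intro x
    have h1 : HasDerivAt (fun u => ∫ w in (0:ℝ)..u, (f2 w) ^ 2) ((f2 x) ^ 2) x :=
      intervalIntegral.integral_hasDerivAt_right (hint x)
        ((hcont2.pow 2).stronglyMeasurableAtFilter _ _) ((hcont2.pow 2).continuousAt)
    have h2 : HasDerivAt (fun u => f2 u * (f1 u - f1 0))
        (f3 x * (f1 x - f1 0) + f2 x * (f2 x - 0)) x := by
      have := (hdiff2 x).hasDerivAt.mul ((hdiff1 x).hasDerivAt.sub_const (f1 0))
      rw [sub_zero]; exact this
    have h2' : HasDerivAt (fun u => c * (f2 u * (f1 u - f1 0)))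
        (c * (f3 x * (f1 x - f1 0) + f2 x * f2 x)) x := by
      simpa [sub_zero] using h2.const_mul c
    exact h2'.sub h1
  -- G is monotone on [M', ∞)
  have hGmono : MonotoneOn G (Set.Ici M') := by
    apply monotoneOn_of_deriv_nonneg (convex_Ici M')
    · exact fun x _ => ((hGderiv x).continuousAt.continuousWithinAt)
    · exact fun x _ => ((hGderiv x).differentiableAt.differentiableWithinAt)
    · intro x hx
      rw [interior_Ici] at hx
      rw [(hGderiv x).deriv]
      have hxM : M ≤ x := le_trans (le_max_left M 0) (le_of_lt hx)
      have hx0 : (0:ℝ) ≤ x := le_trans (le_max_right M 0) (le_of_lt hx)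
      have h3pos : 0 < f3 x := hf''' x hxM
      have hflarge : f1 0 ≤ f1 x := hf1mono hx0
      have hterm1 : 0 ≤ f3 x * (f1 x - f1 0) :=
        mul_nonneg h3pos.le (sub_nonneg.2 hflarge)
      have hterm2 : (f2 x) ^ 2 ≤ c * (f2 x * f2 x) := by
        rw [sq]
        nlinarith [hf2nonneg x, mul_self_nonneg (f2 x)]
      nlinarith [hterm1, hterm2, hc1]
  refine ⟨M', le_max_left M 0, -G M', ?_⟩
  intro u hu
  have := hGmono (Set.self_mem_Ici) hu hu
  rw [hGdef] at this
  simp only at this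
  have hGM : G M' = c * (f2 M' * (f1 M' - f1 0)) - ∫ w in (0:ℝ)..M', (f2 w) ^ 2 := rfl
  have : (∫ w in (0:ℝ)..u, (f2 w) ^ 2) ≤ c * (f2 u * (f1 u - f1 0)) - G M' := by
    rw [hGM]; linarith
  calc (∫ w in (0:ℝ)..u, (f2 w) ^ 2) ≤ c * (f2 u * (f1 u - f1 0)) - G M' := this
    _ = (1 / δ') * f2 u * (f1 u - f1 0) + -G M' := by ring
end
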